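/- The set of perfect powers, X := { a^n : a ∈ ℕ, n ∈ ℕ, n ≥ 2 }, is small. -/

import Mathlib

open Set Filter Topology

/-- An upper quasi-density on ℕ. -/
def IsUpperQuasiDensity (μ : Set ℕ → ℝ) : Prop :=
  μ Set.univ = 1 ∧
  (∀ X : Set ℕ, μ X ≤ 1) ∧
  (∀ X Y : Set ℕ, μ (X ∪ Y) ≤ μ X + μ Y) ∧
  (∀ (X : Set ℕ) (k : ℕ), 0 < k → μ ((fun x => k * x) '' X) = μ X / k) ∧
  (∀ (X : Set ℕ) (h : ℕ), μ ((fun x => x + h) '' X) = μ X)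

/-- An upper density on ℕ: a monotone upper quasi-density. -/
def IsUpperDensity (μ : Set ℕ → ℝ) : Prop :=
  IsUpperQuasiDensity μ ∧ ∀ X Y : Set ℕ, X ⊆ Y → μ X ≤ μ Y

/-- A set of naturals is small if every upper quasi-density vanishes on it. -/
def SmallSet (X : Set ℕ) : Prop :=
  ∀ μ : Set ℕ → ℝ, IsUpperQuasiDensity μ → μ X = 0

/-- The upper asymptotic density of a set of naturals. -/
noncomputable def upperAsymptoticDensity (X : Set ℕ) : ℝ :=
  limsup (fun n : ℕ => ((X ∩ Set.Icc 1 n).ncard : ℝ) / n) atTop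

/-- The arithmetic progression k·ℕ + h. -/
def AP (k h : ℕ) : Set ℕ := {x : ℕ | ∃ m : ℕ, x = k * m + h}

/-- A finite union of arithmetic progressions of ℕ. -/
def IsFinUnionAP (A : Set ℕ) : Prop :=
  ∃ s : Finset (ℕ × ℕ), (∀ p ∈ s, 0 < p.1) ∧ A = ⋃ p ∈ s, AP p.1 p.2

/-- The upper Buck density of a set of naturals. -/
noncomputable def buckDensity (X : Set ℕ) : ℝ :=
  sInf {d : ℝ | ∃ A : Set ℕ, IsFinUnionAP A ∧ X ⊆ A ∧ d = upperAsymptoticDensity A}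

/-- `rk k X` is the number of residues h ∈ [0, k-1] with X ∩ (k·ℕ + h) ≠ ∅. -/
noncomputable def rk (k : ℕ) (X : Set ℕ) : ℕ :=
  {h : ℕ | h < k ∧ (X ∩ AP k h).Nonempty}.ncard

/-- `wk μ k S` is the number of residues h ∈ [0, k-1] with μ(S ∩ (k·ℕ + h)) ≠ 0. -/
noncomputable def wk (μ : Set ℕ → ℝ) (k : ℕ) (S : Set ℕ) : ℕ :=
  {h : ℕ | h < k ∧ μ (S ∩ AP k h) ≠ 0}.ncard

/-! Modulo `p²`, a perfect power divisible by the prime `p` is divisible by `p²`, so perfect powers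
avoid the `p - 1` residues exactly divisible by `p`; by the Chinese remainder theorem they meet at
most `∏ (p² - p + 1)` of the residues modulo `∏ p²`, the product over the primes `p < n`. An upper
quasi-density is at most `1/k` on a subset of a progression `k ℕ + h`, hence, by subadditivity, at
most `r/k` on a set meeting `r` residue classes modulo `k`. The resulting bound
`∏ (1 - (p - 1)/p²) ≤ exp (-∑ 1/(2p))` tends to `0` because `∑ 1/p` diverges. -/

open Finset
open scoped Function

theorem rk_eq_card (k : ℕ) (X : Set ℕ) [DecidablePred fun h => (X ∩ AP k h).Nonempty] :
    rk k X = #{h ∈ Finset.range k | (X ∩ AP k h).Nonempty} := by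
  rw [rk, ← Set.ncard_coe_finset]
  congr 1
  ext h
  simp

theorem mem_AP_mod (k x : ℕ) : x ∈ AP k (x % k) :=
  ⟨x / k, (Nat.div_add_mod x k).symm⟩

theorem Nat.modEq_prod_of_pairwise_coprime {ι : Type*} {s : Finset ι} {n : ι → ℕ}
    (hn : (s : Set ι).Pairwise (Nat.Coprime on n)) {a b : ℕ}
    (h : ∀ i ∈ s, a ≡ b [MOD n i]) : a ≡ b [MOD ∏ i ∈ s, n i] := by
  simp only [Nat.modEq_iff_dvd] at h ⊢
  push_cast
  exact Finset.prod_dvd_of_coprime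
    (fun i hi j hj hij => Nat.isCoprime_iff_coprime.mpr (hn hi hj hij)) h

theorem rk_prod_le {ι : Type*} [DecidableEq ι] {s : Finset ι} {n : ι → ℕ}
    (hn : (s : Set ι).Pairwise (Nat.Coprime on n)) (R : ι → Finset ℕ) {X : Set ℕ}
    (hX : ∀ x ∈ X, ∀ i ∈ s, x % n i ∈ R i) : rk (∏ i ∈ s, n i) X ≤ ∏ i ∈ s, #(R i) := by
  classical
  rw [rk_eq_card, ← card_pi]
  refine card_le_card_of_injOn (fun h i _ => h % n i) ?_ ?_
  · intro h hh
    obtain ⟨-, x, hxX, j, rfl⟩ := mem_filter.mp hh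
    refine mem_pi.mpr fun i hi => ?_
    obtain ⟨c, hc⟩ := dvd_prod_of_mem n hi
    simpa [hc, mul_assoc, Nat.mul_add_mod] using hX _ hxX i hi
  · intro a ha b hb hab
    refine Nat.ModEq.eq_of_lt_of_lt (Nat.modEq_prod_of_pairwise_coprime hn fun i hi => ?_)
      (mem_range.mp (mem_filter.mp ha).1) (mem_range.mp (mem_filter.mp hb).1)
    exact congrFun (congrFun hab i) hi

def perfectPowers : Set ℕ := {x | ∃ a n : ℕ, 2 ≤ n ∧ x = a ^ n}

def residuesAvoidingExactDvd (p : ℕ) : Finset ℕ := {r ∈ Finset.range (p ^ 2) | p ∣ r → r = 0}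

theorem sq_dvd_of_dvd_of_mem_perfectPowers {p x : ℕ} (hp : p.Prime) (hx : x ∈ perfectPowers)
    (hpx : p ∣ x) : p ^ 2 ∣ x := by
  obtain ⟨a, n, hn, rfl⟩ := hx
  exact (pow_dvd_pow_of_dvd (hp.dvd_of_dvd_pow hpx) 2).trans (pow_dvd_pow a hn)

theorem mod_sq_mem_residuesAvoidingExactDvd {p x : ℕ} (hp : p.Prime) (hx : x ∈ perfectPowers) :
    x % p ^ 2 ∈ residuesAvoidingExactDvd p := by
  refine mem_filter.mpr ⟨mem_range.mpr (Nat.mod_lt _ (pow_pos hp.pos 2)), fun hpr => ?_⟩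
  rw [Nat.dvd_mod_iff (dvd_pow_self p two_ne_zero)] at hpr
  exact Nat.mod_eq_zero_of_dvd (sq_dvd_of_dvd_of_mem_perfectPowers hp hx hpr)

theorem card_residuesAvoidingExactDvd_add_le {p : ℕ} (hp : p.Prime) :
    #(residuesAvoidingExactDvd p) + p ≤ p ^ 2 + 1 := by
  have hsub : residuesAvoidingExactDvd p ⊆
      insert 0 {r ∈ Finset.range (p ^ 2) | (p ^ 2).Coprime r} := by
    intro r hr
    obtain ⟨hr, hpr⟩ := mem_filter.mp hr
    by_cases hpr' : p ∣ r
    · simp [hpr hpr']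
    · exact mem_insert_of_mem (mem_filter.mpr
        ⟨hr, Nat.Coprime.pow_left 2 ((Nat.Prime.coprime_iff_not_dvd hp).mpr hpr')⟩)
  have hcard := (Finset.card_le_card hsub).trans (card_insert_le _ _)
  rw [← Nat.totient_eq_card_coprime, Nat.totient_prime_pow_succ hp, pow_one] at hcard
  zify [hp.one_le] at hcard ⊢
  linarith

theorem rk_perfectPowers_div_le {s : Finset ℕ} (hs : ∀ p ∈ s, p.Prime) :
    (rk (∏ p ∈ s, p ^ 2) perfectPowers : ℝ) / ((∏ p ∈ s, p ^ 2 : ℕ) : ℝ) ≤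
      ∏ p ∈ s, (1 - ((p : ℝ) - 1) / p ^ 2) := by
  set R := residuesAvoidingExactDvd
  have hcoprime : (s : Set ℕ).Pairwise (Nat.Coprime on fun p => p ^ 2) :=
    fun p hp q hq hpq => ((Nat.coprime_primes (hs p hp) (hs q hq)).mpr hpq).pow 2 2
  have hrk : rk (∏ p ∈ s, p ^ 2) perfectPowers ≤ ∏ p ∈ s, #(R p) :=
    rk_prod_le hcoprime R fun x hx p hp => mod_sq_mem_residuesAvoidingExactDvd (hs p hp) hx
  have hR (p : ℕ) (hp : p ∈ s) : (#(R p) : ℝ) / p ^ 2 ≤ 1 - ((p : ℝ) - 1) / p ^ 2 := by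
    have hcard : (#(R p) : ℝ) + p ≤ p ^ 2 + 1 := by
      exact_mod_cast card_residuesAvoidingExactDvd_add_le (hs p hp)
    have hp2 : (0 : ℝ) < p ^ 2 := by exact_mod_cast pow_pos (hs p hp).pos 2
    rw [div_le_iff₀ hp2, sub_mul, div_mul_cancel₀ _ hp2.ne']
    linarith
  calc (rk (∏ p ∈ s, p ^ 2) perfectPowers : ℝ) / ((∏ p ∈ s, p ^ 2 : ℕ) : ℝ)
      ≤ (∏ p ∈ s, #(R p) : ℕ) / ((∏ p ∈ s, p ^ 2 : ℕ) : ℝ) := by gcongr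
    _ = ∏ p ∈ s, (#(R p) : ℝ) / p ^ 2 := by push_cast; rw [prod_div_distrib]
    _ ≤ ∏ p ∈ s, (1 - ((p : ℝ) - 1) / p ^ 2) := prod_le_prod (fun p _ => by positivity) hR

namespace IsUpperQuasiDensity

variable {μ : Set ℕ → ℝ} (hμ : IsUpperQuasiDensity μ)
include hμ

theorem empty_eq_zero : μ ∅ = 0 := by
  obtain ⟨-, -, -, hscale, -⟩ := hμ
  have := hscale ∅ 2 two_pos
  simp only [Set.image_empty] at this
  linarith

theorem nonneg (X : Set ℕ) : 0 ≤ μ X := by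
  obtain ⟨huniv, hle, hunion, -, -⟩ := hμ
  have := hunion X Xᶜ
  rw [Set.union_compl_self, huniv] at this
  linarith [hle Xᶜ]

theorem biUnion_le_sum {ι : Type*} (s : Finset ι) (Y : ι → Set ℕ) :
    μ (⋃ i ∈ s, Y i) ≤ ∑ i ∈ s, μ (Y i) := by
  classical
  have hunion := hμ.2.2.1
  induction s using Finset.induction_on with
  | empty => simp [hμ.empty_eq_zero]
  | insert a s ha ih =>
    rw [Finset.set_biUnion_insert, Finset.sum_insert ha]
    linarith [hunion (Y a) (⋃ i ∈ s, Y i)]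

theorem le_inv_of_subset_AP {Y : Set ℕ} {k h : ℕ} (hk : 0 < k) (hY : Y ⊆ AP k h) :
    μ Y ≤ 1 / k := by
  obtain ⟨-, hle, -, hscale, hshift⟩ := hμ
  have hY_eq : Y = (fun x => x + h) '' ((fun x => k * x) '' {m | k * m + h ∈ Y}) := by
    ext y
    constructor
    · intro hy
      obtain ⟨m, rfl⟩ := hY hy
      exact ⟨k * m, ⟨m, hy, rfl⟩, rfl⟩
    · rintro ⟨-, ⟨m, hm, rfl⟩, rfl⟩
      exact hm
  rw [hY_eq, hshift, hscale _ _ hk]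
  gcongr
  exact hle _

theorem le_rk_div {k : ℕ} (hk : 0 < k) (X : Set ℕ) : μ X ≤ rk k X / k := by
  classical
  have hX : X = ⋃ h ∈ Finset.range k, X ∩ AP k h := by
    ext x
    simp only [Set.mem_iUnion, Set.mem_inter_iff, Finset.mem_range]
    exact ⟨fun hx => ⟨x % k, Nat.mod_lt x hk, hx, mem_AP_mod k x⟩, fun ⟨_, _, hx, _⟩ => hx⟩
  have hpiece (h : ℕ) : μ (X ∩ AP k h) ≤ (if (X ∩ AP k h).Nonempty then 1 else 0) / k := by
    split_ifs with hne
    · exact hμ.le_inv_of_subset_AP hk Set.inter_subset_right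
    · rw [Set.not_nonempty_iff_eq_empty.mp hne, hμ.empty_eq_zero, zero_div]
  calc μ X = μ (⋃ h ∈ Finset.range k, X ∩ AP k h) := congrArg μ hX
    _ ≤ ∑ h ∈ Finset.range k, μ (X ∩ AP k h) := hμ.biUnion_le_sum _ _
    _ ≤ ∑ h ∈ Finset.range k, (if (X ∩ AP k h).Nonempty then 1 else 0) / (k : ℝ) :=
      sum_le_sum fun h _ => hpiece h
    _ = rk k X / k := by rw [← sum_div, sum_boole, rk_eq_card]

theorem perfectPowers_le_prod {s : Finset ℕ} (hs : ∀ p ∈ s, p.Prime) :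
    μ perfectPowers ≤ ∏ p ∈ s, (1 - ((p : ℝ) - 1) / p ^ 2) :=
  (hμ.le_rk_div (prod_pos fun p hp => pow_pos (hs p hp).pos 2) _).trans
    (rk_perfectPowers_div_le hs)

end IsUpperQuasiDensity

theorem tendsto_prod_one_sub_of_not_summable {a : ℕ → ℝ} (h0 : ∀ i, 0 ≤ a i)
    (h1 : ∀ i, a i ≤ 1) (ha : ¬ Summable a) :
    Tendsto (fun n => ∏ i ∈ Finset.range n, (1 - a i)) atTop (𝓝 0) := by
  have hsum := (not_summable_iff_tendsto_nat_atTop_of_nonneg h0).mp ha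
  refine squeeze_zero (fun n => prod_nonneg fun i _ => sub_nonneg.mpr (h1 i)) (fun n => ?_)
    (Real.tendsto_exp_atBot.comp (tendsto_neg_atTop_atBot.comp hsum))
  calc ∏ i ∈ Finset.range n, (1 - a i) ≤ ∏ i ∈ Finset.range n, Real.exp (-a i) :=
        prod_le_prod (fun i _ => sub_nonneg.mpr (h1 i)) fun i _ => Real.one_sub_le_exp_neg _
    _ = Real.exp (-∑ i ∈ Finset.range n, a i) := by rw [← Real.exp_sum, sum_neg_distrib]

theorem tendsto_prod_primesBelow_one_sub :
    Tendsto (fun n : ℕ => ∏ p ∈ n.primesBelow, (1 - ((p : ℝ) - 1) / p ^ 2)) atTop (𝓝 0) := by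
  set a := Set.indicator {p | p.Prime} fun p : ℕ => ((p : ℝ) - 1) / p ^ 2
  have hprod (n : ℕ) : ∏ p ∈ n.primesBelow, (1 - ((p : ℝ) - 1) / p ^ 2) =
      ∏ i ∈ Finset.range n, (1 - a i) := by
    rw [Nat.primesBelow, prod_filter]
    refine prod_congr rfl fun i _ => ?_
    by_cases hi : i.Prime <;> simp [a, hi]
  have hbounds (p : ℕ) (hp : p.Prime) : 0 ≤ ((p : ℝ) - 1) / p ^ 2 ∧
      ((p : ℝ) - 1) / p ^ 2 ≤ 1 ∧ (p : ℝ)⁻¹ ≤ 2 * (((p : ℝ) - 1) / p ^ 2) := by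
    have hp2 : (2 : ℝ) ≤ p := by exact_mod_cast hp.two_le
    refine ⟨div_nonneg (by linarith) (by positivity), ?_, ?_⟩
    · rw [div_le_one (by positivity)]
      nlinarith
    · rw [inv_eq_one_div, mul_div_assoc', div_le_div_iff₀ (by positivity) (by positivity)]
      nlinarith
  simp_rw [hprod]
  refine tendsto_prod_one_sub_of_not_summable (fun i => ?_) (fun i => ?_) fun ha =>
    not_summable_one_div_on_primes ((ha.mul_left 2).of_nonneg_of_le (fun i => ?_) fun i => ?_)
  all_goals
    by_cases hi : i.Prime
    · simp [a, hi, hbounds i hi]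
    · simp [a, hi]

/-- The set of perfect powers is small. -/
theorem smallSet_perfect_powers :
    SmallSet {x : ℕ | ∃ (a n : ℕ), 2 ≤ n ∧ x = a ^ n} := by
  intro μ hμ
  have hle (n : ℕ) : μ perfectPowers ≤ ∏ p ∈ n.primesBelow, (1 - ((p : ℝ) - 1) / p ^ 2) :=
    hμ.perfectPowers_le_prod fun _ => Nat.prime_of_mem_primesBelow
  exact le_antisymm (ge_of_tendsto' tendsto_prod_primesBelow_one_sub hle) (hμ.nonneg _)
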